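/- For all nonnegative integers n ≥ 1, k ≤ n and m, there exists an injection g from pRInc^m_k(2×n) into RInc^m_k(2×n) such that for every prime row-increasing tableau T ∈ pRInc^m_k(2×n): (1) the second row of g(T) equals the second row of T; (2) if T_{2,1} appears only once in T, then g(T)_{1,i+1} ≤ g(T)_{2,i} for every i with 1 ≤ i ≤ n−1; (3) T_{2,1} appears twice in T if and only if g(T)_{1,n} = g(T)_{2,n}; and (4) maj(g(T)) = amaj(T) + n − k if T_{1,1} = T_{2,1}, while maj(g(T)) = amaj(T) + m + n − k if T_{1,1} ≠ T_{2,1}. -/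

import Mathlib

/-!
Write `R` and `B` for the sets of entries of the two rows of `T`. The map keeps row 2 and sorts
the set `(R \ B) ∪ {T₂,ⱼ₋₁ | T₂,ⱼ ∈ R}` into row 1, column indices read cyclically (so a doubled
`T₂,₁` contributes `T₂,ₙ`). Since `T₂,ⱼ ∈ R` exactly when `T₂,ⱼ₋₁` lands in the new row, `R` and
hence `T` can be read back off `g(T)`.

Counting the entries `≤ T₂,ᵢ`, the new row 1 has `[T₂,ᵢ₊₁ ∈ R] - [T₂,₁ ∈ R]` more of them than `R`;
primality says that `T₁,ᵢ₊₁ ≤ T₂,ᵢ` whenever `T₂,ᵢ₊₁ ∉ R`, which makes up for the first term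
being `0`. This gives the column inequalities of `g(T)` and property (2).

Descents of `g(T)` at doubled entries are exactly the ascents of `T` into doubled entries. The
remaining ones leave `R \ B`, whose complement in the interval of entries is `B`; summing over the
maximal runs of `R \ B` turns them into the ascents of `T` into `R \ B`, plus one for each element
of `R \ B` (there are `n - k`), plus `m` for the run starting at `m + 1`, i.e. when `T₁,₁ ≠ T₂,₁`.
-/

/-- Major index: sum of all `i` such that `i` appears in row 1 and `i+1` appears in row 2. -/
def maj {n : ℕ} (T : (Fin n → ℕ) × (Fin n → ℕ)) : ℕ :=
  ∑ i ∈ (Finset.image T.1 Finset.univ).filter (fun i => ∃ j, T.2 j = i + 1), i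

/-- Amajor index: sum of all `i` such that `i` appears in row 2 and `i+1` appears in row 1. -/
def amaj {n : ℕ} (T : (Fin n → ℕ) × (Fin n → ℕ)) : ℕ :=
  ∑ i ∈ (Finset.image T.2 Finset.univ).filter (fun i => ∃ j, T.1 j = i + 1), i

/-- Row-increasing tableaux of shape 2×n with entry set `{m+1, …, m+2n−k}`. -/
def RIncM (n k m : ℕ) : Set ((Fin n → ℕ) × (Fin n → ℕ)) :=
  {T | StrictMono T.1 ∧ StrictMono T.2 ∧ (∀ i, T.1 i ≤ T.2 i) ∧
    Set.range T.1 ∪ Set.range T.2 = Set.Icc (m + 1) (m + 2 * n - k)}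

/-- Prime row-increasing tableaux: whenever `T_{1,j+1} = T_{2,j} + 1` (adjacent columns),
the value `T_{2,j+1}` also appears in row 1. -/
def pRIncM (n k m : ℕ) : Set ((Fin n → ℕ) × (Fin n → ℕ)) :=
  {T | T ∈ RIncM n k m ∧
    ∀ i j : Fin n, (j : ℕ) = (i : ℕ) + 1 → T.1 j = T.2 i + 1 → ∃ l, T.1 l = T.2 j}

open Finset

lemma StrictMono.apply_le_iff_card_filter {α : Type*} [LinearOrder α] {n : ℕ} {f : Fin n → α}
    (hf : StrictMono f) (i : Fin n) (v : α) :
    f i ≤ v ↔ (i : ℕ) + 1 ≤ #{x ∈ univ.image f | x ≤ v} := by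
  rw [filter_image, card_image_of_injective _ hf.injective]
  constructor
  · intro hi
    calc (i : ℕ) + 1 = #(Iic i) := (Fin.card_Iic i).symm
      _ ≤ #{l | f l ≤ v} := card_le_card fun l hl =>
          mem_filter.2 ⟨mem_univ l, (hf.monotone (mem_Iic.1 hl)).trans hi⟩
  · intro hcard
    by_contra! hvi
    have hsub : ({l | f l ≤ v} : Finset (Fin n)) ⊆ Iio i := fun l hl =>
      mem_Iio.2 (hf.lt_iff_lt.1 ((mem_filter.1 hl).2.trans_lt hvi))
    have := card_le_card hsub
    rw [Fin.card_Iio] at this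
    omega

lemma StrictMono.card_filter_image_le_apply {α : Type*} [LinearOrder α] {n : ℕ} {b : Fin n → α}
    (hb : StrictMono b) (s : Finset (Fin n)) (i : Fin n) :
    #{x ∈ s.image b | x ≤ b i} = #{l ∈ s | l ≤ i} := by
  rw [filter_image, card_image_of_injective _ hb.injective]
  simp only [hb.le_iff_le]

lemma StrictMono.eq_finRotate_of_add_one_eq {n : ℕ} {b : Fin (n + 1) → ℕ} (hb : StrictMono b)
    {i j : Fin (n + 1)} (h : b i + 1 = b j) : j = finRotate _ i := by
  have hij : i < j := hb.lt_iff_lt.1 (by omega)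
  have hi : i ≠ Fin.last n := ne_of_lt (lt_of_lt_of_le hij (Fin.le_last j))
  have hrot : ((finRotate _ i : Fin (n + 1)) : ℕ) = i + 1 := coe_finRotate_of_ne_last hi
  have hle : finRotate _ i ≤ j := by rw [Fin.le_def, hrot]; exact hij
  have hlt : i < finRotate _ i := by rw [Fin.lt_def, hrot]; omega
  have := hb.monotone hle
  have := hb hlt
  exact (hb.injective (by omega : b (finRotate _ i) = b j)).symm

lemma finRotate_symm_le_iff {n : ℕ} {i j : Fin (n + 1)} (hij : (j : ℕ) = i + 1) (l : Fin (n + 1)) :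
    (finRotate _).symm l ≤ i ↔ l ≠ 0 ∧ l ≤ j := by
  rcases eq_or_ne l 0 with rfl | hl
  · simp only [finRotate_symm_apply, zero_sub, ne_eq, not_true_eq_false, false_and, iff_false,
      not_le, Fin.lt_def, Fin.coe_neg_one]
    omega
  · rw [Fin.le_def, coe_finRotate_symm_of_ne_zero hl, Fin.le_def]
    have : (l : ℕ) ≠ 0 := Fin.val_ne_zero_iff.2 hl
    simp only [ne_eq, hl, not_false_eq_true, true_and]
    omega

lemma card_filter_finRotate_add_ite {n : ℕ} (p : Fin (n + 1) → Prop) [DecidablePred p]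
    {i j : Fin (n + 1)} (hij : (j : ℕ) = i + 1) :
    #{l | p (finRotate _ l) ∧ l ≤ i} + (if p 0 then 1 else 0)
      = #{l | p l ∧ l ≤ i} + if p j then 1 else 0 := by
  rw [card_filter, card_filter, ← Equiv.sum_comp (finRotate _).symm,
    ← Fintype.sum_ite_eq' 0 (fun l => if p l then 1 else 0),
    ← Fintype.sum_ite_eq' j (fun l => if p l then 1 else 0), ← sum_add_distrib, ← sum_add_distrib]
  refine sum_congr rfl fun l _ => ?_
  simp only [Equiv.apply_symm_apply, finRotate_symm_le_iff hij, ne_eq, Fin.ext_iff, Fin.le_def,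
    Fin.val_zero]
  by_cases hp : p l
  · simp only [hp, true_and]
    split_ifs <;> omega
  · simp [hp]

/-- Each maximal run `[s, e]` of `A` contributes `e` on the left and `s - 1` on the right. -/
lemma sum_filter_succ_notMem_eq {A U : Finset ℕ} (h0 : 0 ∉ A)
    (hU : ∀ v, v + 1 ∈ A → v ∉ A → v ∈ U) (hUA : Disjoint U A) :
    ∑ v ∈ A with v + 1 ∉ A, v = ∑ v ∈ U with v + 1 ∈ A, v + #A := by
  have hpos : ∀ w ∈ A, 1 ≤ w := fun w hw => Nat.one_le_iff_ne_zero.2 (by rintro rfl; exact h0 hw)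
  have hsplit := sum_filter_not_add_sum_filter A (fun v => v + 1 ∈ A) id
  have hpred : ∑ v ∈ U ∪ A with v + 1 ∈ A, v = ∑ w ∈ A, (w - 1) := by
    refine sum_nbij' (· + 1) (· - 1) ?_ ?_ ?_ ?_ ?_
    · exact fun v hv => (mem_filter.1 hv).2
    · intro w hw
      have hw1 : w - 1 + 1 = w := Nat.sub_add_cancel (hpos w hw)
      refine mem_filter.2 ⟨?_, hw1 ▸ hw⟩
      by_cases h : w - 1 ∈ A
      · exact mem_union_right _ h
      · exact mem_union_left _ (hU _ (hw1 ▸ hw) h)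
    · intro v _; simp
    · intro w hw; exact Nat.sub_add_cancel (hpos w hw)
    · intro v _; simp
  rw [filter_union, sum_union (disjoint_filter_filter hUA)] at hpred
  have hshift : ∑ w ∈ A, w = ∑ w ∈ A, (w - 1) + #A := by
    rw [card_eq_sum_ones, ← sum_add_distrib]
    exact sum_congr rfl fun w hw => (Nat.sub_add_cancel (hpos w hw)).symm
  simp only [id] at hsplit
  omega

lemma sum_filter_succ_mem_eq_of_union_eq_Icc {A B : Finset ℕ} {m M : ℕ} (hAB : Disjoint A B)
    (hS : A ∪ B = Icc (m + 1) M) (hM : M ∉ A) :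
    ∑ v ∈ A with v + 1 ∈ B, v = ∑ v ∈ B with v + 1 ∈ A, v + #A + if m + 1 ∈ A then m else 0 := by
  have hS' : ∀ v, v ∈ A ∨ v ∈ B ↔ m + 1 ≤ v ∧ v ≤ M := fun v => by
    rw [← mem_union, hS, mem_Icc]
  have hmB : m ∉ B := fun h => by have := (hS' m).1 (Or.inr h); omega
  have hrun : ∑ v ∈ A with v + 1 ∈ B, v = ∑ v ∈ A with v + 1 ∉ A, v := by
    refine sum_congr (filter_congr fun v hv =>
      ⟨fun h => disjoint_left.1 hAB.symm h, fun hv1 => ?_⟩) fun _ _ => rfl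
    have := (hS' v).1 (Or.inl hv)
    have hvM : v ≠ M := by rintro rfl; exact hM hv
    exact ((hS' (v + 1)).2 (by omega)).resolve_left hv1
  have hU : ∀ v, v + 1 ∈ A → v ∉ A → v ∈ insert m B := fun v hv1 hv => by
    have := (hS' (v + 1)).1 (Or.inl hv1)
    rcases Nat.eq_or_lt_of_le (Nat.le_of_succ_le_succ this.1) with rfl | hlt
    · exact mem_insert_self _ _
    · exact mem_insert_of_mem (((hS' v).2 (by omega)).resolve_left hv)
  have hUA : Disjoint (insert m B) A := by
    refine disjoint_insert_left.2 ⟨fun h => ?_, hAB.symm⟩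
    have := (hS' m).1 (Or.inl h); omega
  rw [hrun, sum_filter_succ_notMem_eq (fun h => by have := (hS' 0).1 (Or.inl h); omega) hU hUA,
    filter_insert]
  split_ifs
  · rw [sum_insert fun h => hmB (mem_filter.1 h).1]; ring
  · rfl

lemma maj_eq_sum {n : ℕ} (T : (Fin n → ℕ) × (Fin n → ℕ)) :
    maj T = ∑ v ∈ univ.image T.1 with v + 1 ∈ univ.image T.2, v := by
  simp [maj, eq_comm]

lemma amaj_eq_sum {n : ℕ} (T : (Fin n → ℕ) × (Fin n → ℕ)) :
    amaj T = ∑ v ∈ univ.image T.2 with v + 1 ∈ univ.image T.1, v := by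
  simp [amaj, eq_comm]

namespace RIncM

variable {n k m : ℕ}

section
variable {a b : Fin n → ℕ} (hT : (a, b) ∈ RIncM n k m)
include hT

lemma strictMono_fst : StrictMono a := hT.1

lemma strictMono_snd : StrictMono b := hT.2.1

lemma fst_le_snd (i : Fin n) : a i ≤ b i := hT.2.2.1 i

lemma image_union_image : univ.image a ∪ univ.image b = Icc (m + 1) (m + 2 * n - k) := by
  rw [← coe_inj, coe_union, coe_image, coe_image, coe_univ, Set.image_univ, Set.image_univ,
    coe_Icc]
  exact hT.2.2.2

lemma exists_fst_or_snd_eq_iff (x : ℕ) :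
    (∃ l, a l = x) ∨ (∃ l, b l = x) ↔ m + 1 ≤ x ∧ x ≤ m + 2 * n - k := by
  simpa using congrArg (x ∈ ·) (image_union_image hT)

end

section
variable {a b : Fin (n + 1) → ℕ}

lemma fst_zero_eq (hT : (a, b) ∈ RIncM (n + 1) k m) : a 0 = m + 1 := by
  have ha0 := (exists_fst_or_snd_eq_iff hT (a 0)).1 (Or.inl ⟨0, rfl⟩)
  rcases (exists_fst_or_snd_eq_iff hT (m + 1)).2 ⟨le_rfl, by omega⟩ with ⟨l, hl⟩ | ⟨l, hl⟩
  · have := (strictMono_fst hT).monotone (Fin.zero_le l)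
    omega
  · have := (strictMono_snd hT).monotone (Fin.zero_le l)
    have := fst_le_snd hT 0
    omega

lemma snd_last_eq (hT : (a, b) ∈ RIncM (n + 1) k m) :
    b (Fin.last n) = m + 2 * (n + 1) - k := by
  have hb := (exists_fst_or_snd_eq_iff hT (b (Fin.last n))).1 (Or.inr ⟨_, rfl⟩)
  rcases (exists_fst_or_snd_eq_iff hT (m + 2 * (n + 1) - k)).2 ⟨by omega, le_rfl⟩
    with ⟨l, hl⟩ | ⟨l, hl⟩
  · have := (strictMono_snd hT).monotone (Fin.le_last l)
    have := fst_le_snd hT l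
    omega
  · have := (strictMono_snd hT).monotone (Fin.le_last l)
    omega

lemma fst_le_snd_add_one (hT : (a, b) ∈ RIncM (n + 1) k m) {i j : Fin (n + 1)}
    (hij : (j : ℕ) = i + 1) : a j ≤ b i + 1 := by
  have ha := strictMono_fst hT
  have hb := strictMono_snd hT
  have hlt : b i < b (Fin.last n) := hb (by rw [Fin.lt_def, Fin.val_last]; omega)
  have hbi := (exists_fst_or_snd_eq_iff hT (b i)).1 (Or.inr ⟨i, rfl⟩)
  have hlast := snd_last_eq hT
  have hjl : ∀ l, i < l → j ≤ l := fun l hil => by rw [Fin.le_def]; rw [Fin.lt_def] at hil; omega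
  rcases (exists_fst_or_snd_eq_iff hT (b i + 1)).2 ⟨by omega, by omega⟩ with ⟨l, hl⟩ | ⟨l, hl⟩
  · have := ha.monotone (hjl l (ha.lt_iff_lt.1 (by have := fst_le_snd hT i; omega)))
    omega
  · have := hb.monotone (hjl l (hb.lt_iff_lt.1 (by omega)))
    have := fst_le_snd hT j
    omega

lemma fst_le_snd_of_prime (hT : (a, b) ∈ pRIncM (n + 1) k m) {i j : Fin (n + 1)}
    (hij : (j : ℕ) = i + 1) (hj : b j ∉ Set.range a) : a j ≤ b i := by
  have := fst_le_snd_add_one hT.1 hij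
  by_contra!
  exact hj (hT.2 i j hij (show a j = b i + 1 by omega))

end

section Shift

def predOfDoubled (a b : Fin n → ℕ) : Finset (Fin n) :=
  {i | b (finRotate n i) ∈ univ.image a}

def shiftedRow₁ (a b : Fin n → ℕ) : Finset ℕ :=
  (univ.image a \ univ.image b) ∪ (predOfDoubled a b).image b

/-- The `else` branch is never taken when both rows are injective, see `card_shiftedRow₁`. -/
noncomputable def shift (T : (Fin n → ℕ) × (Fin n → ℕ)) : (Fin n → ℕ) × (Fin n → ℕ) :=
  if h : #(shiftedRow₁ T.1 T.2) = n then ((shiftedRow₁ T.1 T.2).orderEmbOfFin h, T.2) else T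

lemma shift_snd (T : (Fin n → ℕ) × (Fin n → ℕ)) : (shift T).2 = T.2 := by
  unfold shift; split_ifs <;> rfl

variable {a b : Fin n → ℕ}

lemma image_predOfDoubled_subset : (predOfDoubled a b).image b ⊆ univ.image b :=
  image_subset_image (subset_univ _)

lemma disjoint_sdiff_image_predOfDoubled :
    Disjoint (univ.image a \ univ.image b) ((predOfDoubled a b).image b) :=
  disjoint_sdiff_self_left.mono_right image_predOfDoubled_subset

lemma snd_mem_shiftedRow₁_iff (hb : Function.Injective b) (i : Fin n) :
    b i ∈ shiftedRow₁ a b ↔ b (finRotate n i) ∈ univ.image a := by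
  simp [shiftedRow₁, predOfDoubled, hb.eq_iff]

lemma shiftedRow₁_sdiff : shiftedRow₁ a b \ univ.image b = univ.image a \ univ.image b := by
  rw [shiftedRow₁, union_sdiff_distrib, Finset.sdiff_idem,
    sdiff_eq_empty_iff_subset.2 image_predOfDoubled_subset, union_empty]

lemma shiftedRow₁_union : shiftedRow₁ a b ∪ univ.image b = univ.image a ∪ univ.image b := by
  rw [shiftedRow₁, union_assoc, union_eq_right.2 image_predOfDoubled_subset,
    sdiff_union_self_eq_union]

lemma card_shiftedRow₁ (ha : Function.Injective a) (hb : Function.Injective b) :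
    #(shiftedRow₁ a b) = n := by
  have hpred : #(predOfDoubled a b) = #(univ.image a ∩ univ.image b) := by
    refine card_bij (fun l _ => b (finRotate n l)) (fun l hl => ?_) (fun l₁ _ l₂ _ h => ?_) ?_
    · exact mem_inter.2 ⟨(mem_filter.1 hl).2, mem_image_of_mem b (mem_univ _)⟩
    · exact (finRotate n).injective (hb h)
    · intro x hx
      obtain ⟨j, -, rfl⟩ := mem_image.1 (mem_inter.1 hx).2
      refine ⟨(finRotate n).symm j, ?_, by simp [-finRotate_symm_apply]⟩
      simpa [predOfDoubled, -finRotate_symm_apply, -finRotate_apply] using (mem_inter.1 hx).1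
  rw [shiftedRow₁, card_union_of_disjoint disjoint_sdiff_image_predOfDoubled,
    card_image_of_injective _ hb, hpred, card_sdiff_add_card_inter, card_image_of_injective _ ha,
    card_univ, Fintype.card_fin]

lemma shift_eq (ha : Function.Injective a) (hb : Function.Injective b) :
    shift (a, b) = (⇑((shiftedRow₁ a b).orderEmbOfFin (card_shiftedRow₁ ha hb)), b) :=
  dif_pos _

lemma image_shift_fst (ha : Function.Injective a) (hb : Function.Injective b) :
    univ.image (shift (a, b)).1 = shiftedRow₁ a b := by
  rw [shift_eq ha hb, image_orderEmbOfFin_univ]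

lemma image_fst_eq (hb : Function.Injective b) :
    univ.image a = (shiftedRow₁ a b \ univ.image b)
      ∪ ({j | b ((finRotate n).symm j) ∈ shiftedRow₁ a b} : Finset (Fin n)).image b := by
  ext x
  by_cases hx : x ∈ univ.image b
  · obtain ⟨j, -, rfl⟩ := mem_image.1 hx
    simp [snd_mem_shiftedRow₁_iff hb, hb.eq_iff, -finRotate_symm_apply, -finRotate_apply]
  · rw [shiftedRow₁_sdiff, mem_union, mem_sdiff]
    simp only [hx, not_false_eq_true, and_true, iff_self_or]
    exact fun h => absurd (image_subset_image (subset_univ _) h) hx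

lemma injOn_shift :
    Set.InjOn shift {T : (Fin n → ℕ) × (Fin n → ℕ) | StrictMono T.1 ∧ StrictMono T.2} := by
  rintro ⟨a, b⟩ ⟨ha, hb⟩ ⟨a', b'⟩ ⟨ha', -⟩ h
  obtain rfl : b = b' := by simpa only [shift_snd] using congrArg Prod.snd h
  have hrow : shiftedRow₁ a b = shiftedRow₁ a' b := by
    rw [← image_shift_fst ha.injective hb.injective, h, image_shift_fst ha'.injective hb.injective]
  have himage : univ.image a = univ.image a' := by
    rw [image_fst_eq hb.injective, hrow, ← image_fst_eq hb.injective]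
  obtain rfl : a = a' :=
    (ha.range_inj ha').1 (by simpa using congrArg ((↑) : Finset ℕ → Set ℕ) himage)
  rfl

lemma card_filter_shiftedRow₁ (hb : StrictMono b) (i : Fin n) :
    #{x ∈ shiftedRow₁ a b | x ≤ b i} = #{x ∈ univ.image a \ univ.image b | x ≤ b i}
      + #{l | b (finRotate n l) ∈ univ.image a ∧ l ≤ i} := by
  rw [shiftedRow₁, filter_union,
    card_union_of_disjoint (disjoint_filter_filter disjoint_sdiff_image_predOfDoubled),
    hb.card_filter_image_le_apply, predOfDoubled, filter_filter]

lemma card_filter_image_fst (hb : StrictMono b) (i : Fin n) :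
    #{x ∈ univ.image a | x ≤ b i} = #{x ∈ univ.image a \ univ.image b | x ≤ b i}
      + #{l | b l ∈ univ.image a ∧ l ≤ i} := by
  have hinter : univ.image a ∩ univ.image b = ({l | b l ∈ univ.image a} : Finset _).image b := by
    ext x; simp only [mem_inter, mem_image, mem_filter, mem_univ, true_and]
    exact ⟨fun ⟨h, j, hj⟩ => ⟨j, hj ▸ h, hj⟩, fun ⟨j, h, hj⟩ => ⟨hj ▸ h, j, hj⟩⟩
  conv_lhs => rw [← sdiff_union_inter (univ.image a) (univ.image b)]
  rw [filter_union, card_union_of_disjoint (disjoint_filter_filter (disjoint_sdiff_inter _ _)),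
    hinter, hb.card_filter_image_le_apply, filter_filter]

lemma strictMono_shift_fst (ha : StrictMono a) (hb : StrictMono b) :
    StrictMono (shift (a, b)).1 := by
  rw [shift_eq ha.injective hb.injective]
  exact OrderEmbedding.strictMono _

end Shift

section

variable {a b : Fin (n + 1) → ℕ}

lemma le_card_filter_shiftedRow₁ (hT : (a, b) ∈ pRIncM (n + 1) k m) {i j : Fin (n + 1)}
    (hij : (j : ℕ) = i + 1) :
    i + 2 ≤ #{x ∈ shiftedRow₁ a b | x ≤ b i} + if b 0 ∈ univ.image a then 1 else 0 := by
  have ha := strictMono_fst hT.1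
  have hb := strictMono_snd hT.1
  have hG := card_filter_shiftedRow₁ (a := a) hb i
  have hR := card_filter_image_fst (a := a) hb i
  have hrot := card_filter_finRotate_add_ite (fun l => b l ∈ univ.image a) hij
  have hi := (ha.apply_le_iff_card_filter i _).1 (fst_le_snd hT.1 i)
  by_cases hj : b j ∈ univ.image a
  · simp only [hj, if_true] at hrot
    split_ifs at hrot ⊢ <;> omega
  · have := (ha.apply_le_iff_card_filter j _).1
      (fst_le_snd_of_prime hT hij (by simpa [mem_image_univ_iff_mem_range] using hj))
    simp only [hj, if_false] at hrot
    split_ifs at hrot ⊢ <;> omega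

lemma shift_fst_le_snd_last (hT : (a, b) ∈ RIncM (n + 1) k m) (i : Fin (n + 1)) :
    (shift (a, b)).1 i ≤ b (Fin.last n) := by
  have hmem : (shift (a, b)).1 i ∈ univ.image a ∪ univ.image b := by
    rw [← shiftedRow₁_union, ← image_shift_fst (strictMono_fst hT).injective
      (strictMono_snd hT).injective]
    exact mem_union_left _ (mem_image_of_mem _ (mem_univ i))
  rw [image_union_image hT, mem_Icc] at hmem
  rw [snd_last_eq hT]
  exact hmem.2

lemma shift_fst_le_snd (hT : (a, b) ∈ pRIncM (n + 1) k m) (i : Fin (n + 1)) :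
    (shift (a, b)).1 i ≤ b i := by
  have ha := strictMono_fst hT.1
  have hb := strictMono_snd hT.1
  rcases eq_or_ne i (Fin.last n) with rfl | hi
  · exact shift_fst_le_snd_last hT.1 _
  have hin : (i : ℕ) + 1 < n + 1 := by have := Fin.val_lt_last hi; omega
  have := le_card_filter_shiftedRow₁ hT (j := ⟨i + 1, hin⟩) rfl
  rw [(strictMono_shift_fst ha hb).apply_le_iff_card_filter,
    image_shift_fst ha.injective hb.injective]
  split_ifs at this <;> omega

lemma shift_fst_le_snd_of_notMem (hT : (a, b) ∈ pRIncM (n + 1) k m) (h0 : b 0 ∉ Set.range a)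
    {i j : Fin (n + 1)} (hij : (j : ℕ) = i + 1) : (shift (a, b)).1 j ≤ b i := by
  have ha := strictMono_fst hT.1
  have hb := strictMono_snd hT.1
  have := le_card_filter_shiftedRow₁ hT hij
  rw [if_neg (by simpa [mem_image_univ_iff_mem_range] using h0)] at this
  rw [(strictMono_shift_fst ha hb).apply_le_iff_card_filter,
    image_shift_fst ha.injective hb.injective]
  omega

lemma shift_mem (hT : (a, b) ∈ pRIncM (n + 1) k m) : shift (a, b) ∈ RIncM (n + 1) k m := by
  have ha := strictMono_fst hT.1
  have hb := strictMono_snd hT.1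
  refine ⟨strictMono_shift_fst ha hb, by rw [shift_snd]; exact hb,
    fun i => by rw [shift_snd]; exact shift_fst_le_snd hT i, ?_⟩
  rw [shift_snd, ← hT.1.2.2.2]
  have hrow := image_shift_fst ha.injective hb.injective
  simpa using congrArg ((↑) : Finset ℕ → Set ℕ)
    ((congrArg (· ∪ univ.image b) hrow).trans shiftedRow₁_union)

lemma snd_zero_mem_range_iff (hT : (a, b) ∈ RIncM (n + 1) k m) :
    b 0 ∈ Set.range a ↔ (shift (a, b)).1 (Fin.last n) = b (Fin.last n) := by
  have ha := strictMono_fst hT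
  have hb := strictMono_snd hT
  have hrow := image_shift_fst ha.injective hb.injective
  rw [← mem_image_univ_iff_mem_range, ← finRotate_last, ← snd_mem_shiftedRow₁_iff hb.injective,
    ← hrow, mem_image]
  constructor
  · rintro ⟨l, -, hl⟩
    have := (strictMono_shift_fst ha hb).monotone (Fin.le_last l)
    have := shift_fst_le_snd_last hT (Fin.last n)
    omega
  · exact fun h => ⟨_, mem_univ _, h⟩

lemma filter_image_predOfDoubled (hb : StrictMono b) :
    {v ∈ (predOfDoubled a b).image b | v + 1 ∈ univ.image b}
      = {v ∈ univ.image b | v + 1 ∈ univ.image a ∩ univ.image b} := by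
  ext v
  simp only [predOfDoubled, mem_filter, mem_image, mem_univ, true_and, mem_inter]
  constructor
  · rintro ⟨⟨l, ⟨j, hj⟩, rfl⟩, l', hl'⟩
    obtain rfl := hb.eq_finRotate_of_add_one_eq hl'.symm
    exact ⟨⟨l, rfl⟩, ⟨j, hj.trans hl'⟩, _, hl'⟩
  · rintro ⟨⟨l, rfl⟩, ⟨j, hj⟩, l', hl'⟩
    obtain rfl := hb.eq_finRotate_of_add_one_eq hl'.symm
    exact ⟨⟨l, ⟨j, hj.trans hl'.symm⟩, rfl⟩, _, hl'⟩

lemma maj_shift (hT : (a, b) ∈ RIncM (n + 1) k m) :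
    maj (shift (a, b)) = amaj (a, b) + (n + 1 - k) + if a 0 = b 0 then 0 else m := by
  have ha := strictMono_fst hT
  have hb := strictMono_snd hT
  set R := univ.image a
  set B := univ.image b
  have hlast : m + 2 * (n + 1) - k ∉ R \ B := fun h =>
    (mem_sdiff.1 h).2 (snd_last_eq hT ▸ mem_image_of_mem b (mem_univ _))
  have hcard : #(R \ B) = n + 1 - k := by
    have := card_sdiff_add_card R B
    rw [image_union_image hT, Nat.card_Icc, card_image_of_injective _ hb.injective, card_univ,
      Fintype.card_fin] at this
    omega
  have hstart : m + 1 ∈ R \ B ↔ a 0 ≠ b 0 := by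
    rw [mem_sdiff, ← fst_zero_eq hT]
    simp only [mem_image_of_mem a (mem_univ 0), true_and, R, B, mem_image, mem_univ]
    refine ⟨fun h h0 => h ⟨0, h0.symm⟩, fun h0 ⟨l, hl⟩ => h0 ?_⟩
    have := hb.monotone (Fin.zero_le l)
    have := fst_le_snd hT 0
    omega
  have hamaj : amaj (a, b) = ∑ v ∈ B with v + 1 ∈ R \ B, v + ∑ v ∈ B with v + 1 ∈ R ∩ B, v := by
    rw [amaj_eq_sum, ← sum_union (disjoint_filter.2 fun v _ h1 h2 =>
      disjoint_sdiff_inter R B |>.forall_ne_finset h1 h2 rfl), ← filter_or]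
    simp only [← mem_union, sdiff_union_inter]
    rfl
  rw [maj_eq_sum, image_shift_fst ha.injective hb.injective, shift_snd, shiftedRow₁,
    filter_union, sum_union (disjoint_filter_filter disjoint_sdiff_image_predOfDoubled),
    filter_image_predOfDoubled hb, hamaj,
    sum_filter_succ_mem_eq_of_union_eq_Icc disjoint_sdiff_self_left
      (by rw [sdiff_union_self_eq_union, image_union_image hT]) hlast, hcard]
  by_cases h0 : a 0 = b 0
  · rw [if_neg (by rwa [hstart, not_not]), if_pos h0]; ring
  · rw [if_pos (hstart.2 h0), if_neg h0]; ring

end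

end RIncM

/-- There is an injection g : pRInc^m_k(2×n) → RInc^m_k(2×n) preserving row 2, such that:
if T_{2,1} appears only once then g(T)_{1,i+1} ≤ g(T)_{2,i} for all i;
T_{2,1} appears twice iff g(T)_{1,n} = g(T)_{2,n};
and maj(g(T)) = amaj(T) + n − k if T_{1,1} = T_{2,1},
while maj(g(T)) = amaj(T) + m + n − k if T_{1,1} ≠ T_{2,1}. -/
theorem g_injection (n k m : ℕ) (hn : 1 ≤ n) :
    ∃ g : ((Fin n → ℕ) × (Fin n → ℕ)) → ((Fin n → ℕ) × (Fin n → ℕ)),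
      Set.InjOn g (pRIncM n k m) ∧
      Set.MapsTo g (pRIncM n k m) (RIncM n k m) ∧
      ∀ T ∈ pRIncM n k m,
        (g T).2 = T.2 ∧
        ((¬ ∃ j, T.1 j = T.2 ⟨0, hn⟩) →
          ∀ i j : Fin n, (j : ℕ) = (i : ℕ) + 1 → (g T).1 j ≤ (g T).2 i) ∧
        ((∃ j, T.1 j = T.2 ⟨0, hn⟩) ↔
          (g T).1 ⟨n - 1, by omega⟩ = (g T).2 ⟨n - 1, by omega⟩) ∧
        (T.1 ⟨0, hn⟩ = T.2 ⟨0, hn⟩ → maj (g T) = amaj T + (n - k)) ∧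
        (T.1 ⟨0, hn⟩ ≠ T.2 ⟨0, hn⟩ → maj (g T) = amaj T + m + (n - k)) := by
  obtain ⟨n, rfl⟩ : ∃ n', n = n' + 1 := ⟨n - 1, by omega⟩
  refine ⟨RIncM.shift,
    RIncM.injOn_shift.mono fun _ hT => (⟨hT.1.1, hT.1.2.1⟩ : StrictMono _ ∧ StrictMono _),
    fun T hT => RIncM.shift_mem hT, fun ⟨a, b⟩ hT => ?_⟩
  have hzero : (⟨0, hn⟩ : Fin (n + 1)) = 0 := rfl
  have hlast : (⟨n + 1 - 1, by omega⟩ : Fin (n + 1)) = Fin.last n := rfl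
  simp only [hzero, hlast, RIncM.shift_snd, true_and]
  refine ⟨fun h0 i j hij => RIncM.shift_fst_le_snd_of_notMem hT h0 hij,
    RIncM.snd_zero_mem_range_iff hT.1, fun h0 => ?_, fun h0 => ?_⟩
  · rw [RIncM.maj_shift hT.1, if_pos h0, add_zero]
  · rw [RIncM.maj_shift hT.1, if_neg h0]
    ring
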